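/- There is an absolute constant c > 0 such that for every sufficiently large integer N, if the points of [N] × [N] = {1,…,N} × {1,…,N} are colored with at most c·log log N colors, then there is always a monochromatic corner: three points (a,b), (a′,b), (a,b′) of the same color with a′ + b = a + b′ and a′ > a. -/

import Mathlib

/-!
Color focusing along antidiagonals. Suppose `χ` has no monochromatic corner in `[N] × [N]`.
We keep an antidiagonal `x + y = s`, a set `A` of abscissae and a set `F` of colors such that
every point `(x, s - y)` with `x ≤ y` in `A` avoids `F`. By pigeonhole, the antidiagonal points
`(x, s - x)` have a popular color `c` on some `S ⊆ A`, and `S` has a popular difference `δ > 0`.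
Passing to `s - δ` and `{x ∈ S | x + δ ∈ S}` adds `c` to `F`: a point `(x, s - (y + δ))` of
color `c` would complete a corner with `(y + δ, s - (y + δ))` and `(x, s - x)`. Each step squares
the loss in `#A`, so once `N` is doubly exponential in the number of colors, `A` survives until
`F` contains every color, and then `(x, s - x)` has no color at all.
-/

open Finset

theorem Finset.exists_card_le_mul_card_fiber {α β : Type*} [DecidableEq β] {s : Finset α}
    {t : Finset β} {f : α → β} (hf : ∀ a ∈ s, f a ∈ t) (ht : t.Nonempty) :
    ∃ b ∈ t, #s ≤ #t * #{a ∈ s | f a = b} := by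
  obtain ⟨b, hb, hmax⟩ := t.exists_max_image (fun b ↦ #{a ∈ s | f a = b}) ht
  refine ⟨b, hb, ?_⟩
  calc #s = ∑ c ∈ t, #{a ∈ s | f a = c} := card_eq_sum_card_fiberwise hf
    _ ≤ ∑ _c ∈ t, #{a ∈ s | f a = b} := sum_le_sum hmax
    _ = #t * #{a ∈ s | f a = b} := by rw [sum_const, smul_eq_mul]

theorem Finset.card_mul_self_le_two_mul_card_filter_lt_add {α : Type*} [LinearOrder α]
    (s : Finset α) : #s * #s ≤ 2 * #{p ∈ s ×ˢ s | p.1 < p.2} + #s := by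
  set P := {p ∈ s ×ˢ s | p.1 < p.2}
  have hcover : s ×ˢ s ⊆ P ∪ P.image Prod.swap ∪ s.diag := by
    rintro ⟨x, y⟩ hxy
    rw [mem_product] at hxy
    rcases lt_trichotomy x y with h | rfl | h
    · simp [P, hxy, h]
    · simp [hxy]
    · simp [P, hxy, h]
  calc #s * #s = #(s ×ˢ s) := (card_product s s).symm
    _ ≤ #(P ∪ P.image Prod.swap ∪ s.diag) := card_le_card hcover
    _ ≤ #P + #(P.image Prod.swap) + #s.diag :=
      (card_union_le _ _).trans (Nat.add_le_add_right (card_union_le _ _) _)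
    _ ≤ 2 * #P + #s := by
      rw [diag_card]
      linarith [card_image_le (s := P) (f := Prod.swap)]

theorem Finset.exists_popular_difference (S : Finset ℕ) {N : ℕ} (hS : ∀ x ∈ S, x ≤ N)
    (h : 1 < #S) : ∃ δ, 0 < δ ∧ #S * #S ≤ 4 * N * #{x ∈ S | x + δ ∈ S} := by
  set P := {p ∈ S ×ˢ S | p.1 < p.2}
  have hP : #S * #S ≤ 2 * #P + #S := S.card_mul_self_le_two_mul_card_filter_lt_add
  have hmaps : ∀ p ∈ P, p.2 - p.1 ∈ Icc 1 N := by
    intro p hp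
    simp only [P, mem_filter, mem_product] at hp
    have := hS _ hp.1.2
    rw [mem_Icc]; omega
  obtain ⟨p, hp⟩ : P.Nonempty := card_pos.mp (by nlinarith)
  obtain ⟨δ, hδ, hfiber⟩ := exists_card_le_mul_card_fiber hmaps ⟨_, hmaps p hp⟩
  have hinj : #{p ∈ P | p.2 - p.1 = δ} ≤ #{x ∈ S | x + δ ∈ S} := by
    refine card_le_card_of_injOn Prod.fst ?_ ?_
    · intro p hp
      simp only [P, mem_coe, mem_filter, mem_product] at hp ⊢
      obtain ⟨⟨⟨h1, h2⟩, hlt⟩, rfl⟩ := hp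
      exact ⟨h1, by rwa [Nat.add_sub_cancel' hlt.le]⟩
    · intro p hp q hq hpq
      simp only [P, mem_coe, mem_filter] at hp hq
      exact Prod.ext hpq (by omega)
  rw [Nat.card_Icc, Nat.add_sub_cancel] at hfiber
  refine ⟨δ, (mem_Icc.mp hδ).1, ?_⟩
  nlinarith

theorem lt_of_mul_le_mul_pow_two_pow {r N a M k : ℕ} (hM : 0 < M) (hk : k ≤ r)
    (hN : r * M ^ 2 ^ r < N) (ha : N * M ≤ a * M ^ 2 ^ k) : r < a := by
  have hpow : M ^ 2 ^ k ≤ M ^ 2 ^ r :=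
    Nat.pow_le_pow_right hM (Nat.pow_le_pow_right two_pos hk)
  refine Nat.lt_of_mul_lt_mul_right (a := M ^ 2 ^ k) ?_
  calc r * M ^ 2 ^ k ≤ r * M ^ 2 ^ r := Nat.mul_le_mul_left r hpow
    _ < N := hN
    _ ≤ N * M := Nat.le_mul_of_pos_right N hM
    _ ≤ a * M ^ 2 ^ k := ha

theorem le_mul_pow_two_pow_succ {N M a a' k : ℕ} (hNM : 0 < N * M)
    (ha : N * M ≤ a * M ^ 2 ^ k) (ha' : a * a ≤ M * N * a') :
    N * M ≤ a' * M ^ 2 ^ (k + 1) := by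
  refine Nat.le_of_mul_le_mul_left (a := N * M) ?_ hNM
  calc N * M * (N * M) ≤ (a * M ^ 2 ^ k) * (a * M ^ 2 ^ k) := Nat.mul_le_mul ha ha
    _ = a * a * M ^ 2 ^ (k + 1) := by ring
    _ ≤ M * N * a' * M ^ 2 ^ (k + 1) := Nat.mul_le_mul_right _ ha'
    _ = N * M * (a' * M ^ 2 ^ (k + 1)) := by ring

def HasMonochromaticCorner {κ : Type*} (N : ℕ) (χ : ℕ × ℕ → κ) : Prop :=
  ∃ a b d : ℕ, 1 ≤ a ∧ 1 ≤ b ∧ 0 < d ∧ a + d ≤ N ∧ b + d ≤ N ∧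
    χ (a, b) = χ (a + d, b) ∧ χ (a, b) = χ (a, b + d)

section Focusing

variable {κ : Type*} {N s : ℕ} {χ : ℕ × ℕ → κ}

def TriangleAvoids (χ : ℕ × ℕ → κ) (s : ℕ) (A : Finset ℕ) (F : Finset κ) : Prop :=
  ∀ x ∈ A, ∀ y ∈ A, x ≤ y → χ (x, s - y) ∉ F

theorem TriangleAvoids.mono {A B : Finset ℕ} {F : Finset κ} (h : TriangleAvoids χ s A F)
    (hBA : B ⊆ A) : TriangleAvoids χ s B F :=
  fun x hx y hy ↦ h x (hBA hx) y (hBA hy)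

theorem hasMonochromaticCorner_of_antidiagonal {x y : ℕ} (hx : 0 < x) (hxy : x < y) (hys : y < s)
    (hs : s ≤ N + 1) (h₁ : χ (x, s - y) = χ (y, s - y))
    (h₂ : χ (x, s - y) = χ (x, s - x)) :
    HasMonochromaticCorner N χ := by
  refine ⟨x, s - y, y - x, hx, by omega, by omega, by omega, by omega, ?_, ?_⟩
  · rwa [Nat.add_sub_cancel' hxy.le]
  · rwa [show s - y + (y - x) = s - x by omega]

theorem TriangleAvoids.shift [DecidableEq κ] {S : Finset ℕ} {F : Finset κ} {c : κ} {δ : ℕ}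
    (hχ : ¬HasMonochromaticCorner N χ) (hs : s ≤ N + 1) (hS : S ⊆ Ioo 0 s)
    (hc : ∀ x ∈ S, χ (x, s - x) = c) (hF : TriangleAvoids χ s S F) (hδ : 0 < δ) :
    TriangleAvoids χ (s - δ) {x ∈ S | x + δ ∈ S} (insert c F) := by
  intro x hx y hy hxy
  simp only [mem_filter] at hx hy
  have hys := (mem_Ioo.mp (hS hy.2)).2
  rw [show s - δ - y = s - (y + δ) by omega, mem_insert, not_or]
  refine ⟨fun hcol ↦ hχ ?_, hF x hx.1 (y + δ) hy.2 (by omega)⟩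
  exact hasMonochromaticCorner_of_antidiagonal (mem_Ioo.mp (hS hx.1)).1 (by omega) hys hs
    (hcol.trans (hc _ hy.2).symm) (hcol.trans (hc _ hx.1).symm)

variable [Fintype κ] [DecidableEq κ]

theorem exists_triangleAvoids_step {A : Finset ℕ} {F : Finset κ}
    (hχ : ¬HasMonochromaticCorner N χ) (hs : s ≤ N + 1) (hA : A ⊆ Ioo 0 s)
    (hF : TriangleAvoids χ s A F) (hcard : Fintype.card κ < #A) :
    ∃ F' : Finset κ, #F' = #F + 1 ∧ ∃ s' ≤ N + 1, ∃ A' ⊆ Ioo 0 s',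
      TriangleAvoids χ s' A' F' ∧ #A * #A ≤ 4 * Fintype.card κ ^ 2 * N * #A' := by
  obtain ⟨x₀, hx₀⟩ : A.Nonempty := card_pos.mp (by omega)
  obtain ⟨c, -, hAS⟩ := exists_card_le_mul_card_fiber (fun x _ ↦ mem_univ (χ (x, s - x)))
    ⟨_, mem_univ (χ (x₀, s - x₀))⟩
  set S := {x ∈ A | χ (x, s - x) = c}
  rw [card_univ] at hAS
  have hSA : S ⊆ A := filter_subset _ _
  have hc : ∀ x ∈ S, χ (x, s - x) = c := fun x hx ↦ (mem_filter.mp hx).2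
  have hS : 1 < #S := by nlinarith
  obtain ⟨x₁, hx₁⟩ : S.Nonempty := card_pos.mp (by omega)
  have hcF : c ∉ F := hc x₁ hx₁ ▸ hF x₁ (hSA hx₁) x₁ (hSA hx₁) le_rfl
  obtain ⟨δ, hδ, hSδ⟩ := Finset.exists_popular_difference S (N := N)
    (fun x hx ↦ by have := mem_Ioo.mp (hA (hSA hx)); omega) hS
  refine ⟨insert c F, card_insert_of_notMem hcF, s - δ, by omega, {x ∈ S | x + δ ∈ S}, ?_,
    (hF.mono hSA).shift hχ hs (hSA.trans hA) hc hδ, ?_⟩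
  · intro x hx
    simp only [mem_filter, mem_Ioo] at hx ⊢
    have := mem_Ioo.mp (hA (hSA hx.1))
    have := mem_Ioo.mp (hA (hSA hx.2))
    omega
  · calc #A * #A ≤ (Fintype.card κ * #S) * (Fintype.card κ * #S) := Nat.mul_le_mul hAS hAS
      _ = Fintype.card κ ^ 2 * (#S * #S) := by ring
      _ ≤ Fintype.card κ ^ 2 * (4 * N * #{x ∈ S | x + δ ∈ S}) := Nat.mul_le_mul_left _ hSδ
      _ = _ := by ring

theorem exists_triangleAvoids_card_eq (hχ : ¬HasMonochromaticCorner N χ)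
    (hN : Fintype.card κ * (4 * Fintype.card κ ^ 2) ^ 2 ^ Fintype.card κ < N) :
    ∀ k ≤ Fintype.card κ, ∃ s ≤ N + 1, ∃ A ⊆ Ioo 0 s, ∃ F : Finset κ, #F = k ∧
      TriangleAvoids χ s A F ∧
        N * (4 * Fintype.card κ ^ 2) ≤ #A * (4 * Fintype.card κ ^ 2) ^ 2 ^ k := by
  set r := Fintype.card κ
  set M := 4 * r ^ 2
  intro k
  induction k with
  | zero =>
    intro _
    refine ⟨N + 1, le_rfl, Ioo 0 (N + 1), subset_rfl, ∅, card_empty, ?_, by simp⟩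
    intro x _ y _ _
    exact notMem_empty _
  | succ k ih =>
    intro hk
    obtain ⟨s, hs, A, hA, F, rfl, hF, hbound⟩ := ih (by omega)
    have hM : 0 < M := Nat.mul_pos four_pos (pow_pos (by omega) 2)
    obtain ⟨F', hF', s', hs', A', hA', hF'A', hcard⟩ :=
      exists_triangleAvoids_step hχ hs hA hF
        (lt_of_mul_le_mul_pow_two_pow hM (by omega) hN hbound)
    exact ⟨s', hs', A', hA', F', hF', hF'A',
      le_mul_pow_two_pow_succ (Nat.mul_pos (by omega) hM) hbound hcard⟩

theorem hasMonochromaticCorner_of_card_mul_lt (χ : ℕ × ℕ → κ)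
    (hN : Fintype.card κ * (4 * Fintype.card κ ^ 2) ^ 2 ^ Fintype.card κ < N) :
    HasMonochromaticCorner N χ := by
  by_contra hχ
  have hr : 0 < Fintype.card κ := Fintype.card_pos_iff.mpr ⟨χ (1, 1)⟩
  obtain ⟨s, -, A, -, F, hF, hAF, hbound⟩ := exists_triangleAvoids_card_eq hχ hN _ le_rfl
  obtain ⟨x, hx⟩ : A.Nonempty := card_pos.mp <| lt_trans hr <|
    lt_of_mul_le_mul_pow_two_pow (Nat.mul_pos four_pos (pow_pos hr 2)) le_rfl hN hbound
  exact hAF x hx x hx le_rfl ((card_eq_iff_eq_univ F).mp hF ▸ mem_univ _)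

end Focusing

theorem mul_pow_two_pow_lt (r : ℕ) : r * (4 * r ^ 2) ^ 2 ^ r < 2 ^ 2 ^ (3 * r + 3) := by
  have hr : r < 2 ^ r := Nat.lt_two_pow_self
  have h4r : 4 * r ^ 2 ≤ 2 ^ (2 * r + 2) :=
    calc 4 * r ^ 2 ≤ 4 * (2 ^ r) ^ 2 := Nat.mul_le_mul_left 4 (Nat.pow_le_pow_left hr.le 2)
      _ = 2 ^ (2 * r + 2) := by ring
  have hexp : r + (2 * r + 2) * 2 ^ r ≤ 2 ^ (3 * r + 3) := by
    have : 2 * r + 3 < 2 ^ (2 * r + 3) := Nat.lt_two_pow_self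
    rw [show 3 * r + 3 = (2 * r + 3) + r by ring, pow_add]
    nlinarith
  calc r * (4 * r ^ 2) ^ 2 ^ r < 2 ^ r * (2 ^ (2 * r + 2)) ^ 2 ^ r :=
        Nat.mul_lt_mul_of_lt_of_le hr (Nat.pow_le_pow_left h4r _) (by positivity)
    _ = 2 ^ (r + (2 * r + 2) * 2 ^ r) := by rw [← pow_mul, ← pow_add]
    _ ≤ 2 ^ 2 ^ (3 * r + 3) := Nat.pow_le_pow_right two_pos hexp

theorem Real.two_pow_le_exp (n : ℕ) : (2 : ℝ) ^ n ≤ Real.exp n := by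
  calc (2 : ℝ) ^ n ≤ Real.exp 1 ^ n := by
        gcongr
        linarith [Real.add_one_le_exp 1]
    _ = Real.exp n := by rw [← Real.exp_nat_mul, mul_one]

theorem Real.two_pow_two_pow_le {x : ℝ} (hx : 1 < x) {n : ℕ} (h : n ≤ Real.log (Real.log x)) :
    (2 : ℝ) ^ 2 ^ n ≤ x := by
  have hlog : 0 < Real.log x := Real.log_pos hx
  have hn : (2 : ℝ) ^ n ≤ Real.log x :=
    (Real.two_pow_le_exp n).trans ((Real.le_log_iff_exp_le hlog).mp h)
  calc (2 : ℝ) ^ 2 ^ n ≤ Real.exp ((2 ^ n : ℕ) : ℝ) := Real.two_pow_le_exp _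
    _ ≤ Real.exp (Real.log x) := by gcongr; exact_mod_cast hn
    _ = x := Real.exp_log (by linarith)

/-- There is an absolute constant `c > 0` such that for every sufficiently large
`N`, any coloring of `{1, …, N} × {1, …, N}` with at most `c * log log N` colors
contains a monochromatic corner: points `(a, b)`, `(a + d, b)`, `(a, b + d)` of
the same color with `d > 0`. -/
theorem monochromatic_corner_in_grid :
    ∃ c : ℝ, 0 < c ∧ ∃ N₀ : ℕ, ∀ N : ℕ, N₀ ≤ N →
      ∀ r : ℕ, (r : ℝ) ≤ c * Real.log (Real.log N) →
        ∀ χ : ℕ × ℕ → Fin r, ∃ a b d : ℕ,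
          1 ≤ a ∧ 1 ≤ b ∧ 0 < d ∧ a + d ≤ N ∧ b + d ≤ N ∧
          χ (a, b) = χ (a + d, b) ∧ χ (a, b) = χ (a, b + d) := by
  refine ⟨1 / 6, by norm_num, ⌈Real.exp (Real.exp 6)⌉₊, fun N hN r hr χ ↦ ?_⟩
  have hN : Real.exp (Real.exp 6) ≤ N := Nat.ceil_le.mp hN
  have hN1 : 1 < (N : ℝ) := (Real.one_lt_exp_iff.mpr (Real.exp_pos 6)).trans_le hN
  have hlog : Real.exp 6 ≤ Real.log N := (Real.le_log_iff_exp_le (by linarith)).mpr hN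
  have hloglog : 6 ≤ Real.log (Real.log N) :=
    (Real.le_log_iff_exp_le ((Real.exp_pos 6).trans_le hlog)).mpr hlog
  have hpow : ((2 ^ 2 ^ (3 * r + 3) : ℕ) : ℝ) ≤ N := by
    push_cast
    exact Real.two_pow_two_pow_le hN1 (by push_cast; linarith)
  refine hasMonochromaticCorner_of_card_mul_lt χ ?_
  rw [Fintype.card_fin]
  exact (mul_pow_two_pow_lt r).trans_le (by exact_mod_cast hpow)
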